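/- arXiv:2103.10373 — 4 statements merged into one kernel-verified Lean document; each statement's English description precedes it below -/
import Mathlib

section
/- Let A_1, …, A_M ∈ ℂ^{N×N} be simultaneously unitarily triangularizable with common unitary Q, with (λ_ℓ)_i denoting the i-th diagonal entry of Q^H A_ℓ Q. Let S ∈ ℂ^{M×M}. Then the spectrum of the MN×MN matrix A = diag(A_1,…,A_M) + S ⊗ I_N equals the union over i = 1,…,N of the spectra of the M×M matrices B_i = diag((λ_1)_i, …, (λ_M)_i) + S. -/
open Matrix Kronecker

/-!
Conjugating by the unitary `I_M ⊗ Q` fixes `S ⊗ I_N` and replaces each block `A_ℓ` by the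
upper triangular `Qᴴ A_ℓ Q`. Ordering the indices by their `Fin N` coordinate first (the
convention of Mathlib's `blockDiagonal`, which puts the block index second), the conjugated
matrix is block upper triangular, and its `i`-th diagonal block is `diag((λ_ℓ)_i) + S`.
-/

namespace Matrix

variable {R : Type*} [CommRing R] {m n : Type*} [DecidableEq m] [DecidableEq n]

theorem blockTriangular_blockDiagonal_add_one_kronecker [LinearOrder n]
    {T : m → Matrix n n R} (hT : ∀ k, (T k).IsUpperTriangular) (S : Matrix m m R) :
    (blockDiagonal T + 1 ⊗ₖ S).BlockTriangular Prod.fst := by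
  rintro ⟨i, k⟩ ⟨j, l⟩ (hji : j < i)
  simp [blockDiagonal_apply, hji.ne', hT _ hji]

theorem submatrix_blockDiagonal_add_one_kronecker (T : m → Matrix n n R) (S : Matrix m m R)
    (i : n) :
    (blockDiagonal T + 1 ⊗ₖ S).submatrix (i, ·) (i, ·) = diagonal (fun k => T k i i) + S := by
  ext k l
  simp only [submatrix_apply, Matrix.add_apply, kroneckerMap_apply, one_apply_eq, one_mul,
    blockDiagonal_apply, diagonal_apply]

variable [Fintype m] [Fintype n]

theorem blockDiagonal_const_mul_add_one_kronecker_mul {P Q : Matrix n n R} (hPQ : P * Q = 1)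
    (A : m → Matrix n n R) (S : Matrix m m R) :
    blockDiagonal (fun _ => P) * (blockDiagonal A + 1 ⊗ₖ S) * blockDiagonal (fun _ => Q) =
      blockDiagonal (fun k => P * A k * Q) + 1 ⊗ₖ S := by
  have hcomm : blockDiagonal (fun _ => P) * (1 ⊗ₖ S) = (1 ⊗ₖ S) * blockDiagonal (fun _ => P) := by
    simp only [← kronecker_one, ← mul_kronecker_mul, Matrix.mul_one, Matrix.one_mul]
  rw [Matrix.mul_add, Matrix.add_mul, hcomm, Matrix.mul_assoc (1 ⊗ₖ S), ← blockDiagonal_mul,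
    ← blockDiagonal_mul, ← blockDiagonal_mul, hPQ, ← kronecker_one, one_kronecker_one,
    Matrix.mul_one]

theorem charpoly_star_mul_mul_of_mem_unitaryGroup [StarRing R] {U : Matrix n n R}
    (hU : U ∈ unitaryGroup n R) (X : Matrix n n R) : (star U * X * U).charpoly = X.charpoly := by
  rw [charpoly_mul_comm, ← Matrix.mul_assoc, Unitary.mul_star_self_of_mem hU, Matrix.one_mul]

theorem charpoly_toSquareBlock_fst (X : Matrix (n × m) (n × m) R) (i : n) :
    (X.toSquareBlock Prod.fst i).charpoly = (X.submatrix (i, ·) (i, ·)).charpoly := by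
  let e : {p : n × m // p.1 = i} ≃ m :=
    { toFun p := p.1.2
      invFun k := ⟨(i, k), rfl⟩
      left_inv := by rintro ⟨⟨_, k⟩, rfl⟩; rfl
      right_inv _ := rfl }
  rw [← charpoly_reindex e]
  rfl

theorem BlockTriangular.charpoly_eq_prod_fst [LinearOrder n] {X : Matrix (n × m) (n × m) R}
    (hX : X.BlockTriangular Prod.fst) :
    X.charpoly = ∏ i, (X.submatrix (i, ·) (i, ·)).charpoly := by
  simp only [Matrix.charpoly, hX.charmatrix.det_fintype, ← charmatrix_toSquareBlock]
  exact Finset.prod_congr rfl fun i _ => X.charpoly_toSquareBlock_fst i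

end Matrix

/-- Multiplex decomposition: the characteristic polynomial of
diag(A₁,…,A_M) + S ⊗ I_N factors into those of the M×M matrices
diag((λ₁)_i,…,(λ_M)_i) + S. -/
theorem multiplex_decomposition (M N : ℕ)
    (Q : Matrix (Fin N) (Fin N) ℂ) (hQ : Q ∈ Matrix.unitaryGroup (Fin N) ℂ)
    (A : Fin M → Matrix (Fin N) (Fin N) ℂ)
    (hT : ∀ ℓ, ∀ i j : Fin N, j < i → (Qᴴ * A ℓ * Q) i j = 0)
    (S : Matrix (Fin M) (Fin M) ℂ) :
    (Matrix.of fun p q : Fin M × Fin N =>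
        (if p.1 = q.1 then A p.1 p.2 q.2 else 0) +
          S p.1 q.1 * (if p.2 = q.2 then 1 else 0)).charpoly =
      ∏ i : Fin N,
        (Matrix.diagonal (fun ℓ : Fin M => (Qᴴ * A ℓ * Q) i i) + S).charpoly := by
  have hswap : (Matrix.of fun p q : Fin M × Fin N =>
        (if p.1 = q.1 then A p.1 p.2 q.2 else 0) +
          S p.1 q.1 * (if p.2 = q.2 then 1 else 0)) =
      reindex (Equiv.prodComm _ _) (Equiv.prodComm _ _) (blockDiagonal A + 1 ⊗ₖ S) := by
    ext p q
    simp [blockDiagonal_apply, one_apply, mul_comm]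
  have hconj : star (blockDiagonal fun _ => Q) * (blockDiagonal A + 1 ⊗ₖ S) *
      blockDiagonal (fun _ => Q) = blockDiagonal (fun ℓ => Qᴴ * A ℓ * Q) + 1 ⊗ₖ S := by
    rw [star_eq_conjTranspose, blockDiagonal_conjTranspose]
    exact blockDiagonal_const_mul_add_one_kronecker_mul (Unitary.star_mul_self_of_mem hQ) A S
  have hU : blockDiagonal (fun _ => Q) ∈ unitaryGroup (Fin N × Fin M) ℂ := by
    rw [← kronecker_one]
    exact kronecker_mem_unitary hQ (one_mem _)
  have hupper (ℓ : Fin M) : (Qᴴ * A ℓ * Q).IsUpperTriangular := fun _ _ => hT ℓ _ _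
  rw [hswap, charpoly_reindex, ← charpoly_star_mul_mul_of_mem_unitaryGroup hU, hconj,
    (blockTriangular_blockDiagonal_add_one_kronecker hupper S).charpoly_eq_prod_fst]
  simp only [submatrix_blockDiagonal_add_one_kronecker]
end

section
/- Let A_1, A_2 ∈ ℂ^{N×N} be simultaneously unitarily triangularizable with common unitary Q, with (λ_1)_i, (λ_2)_i the i-th diagonal entries of Q^H A_1 Q and Q^H A_2 Q respectively, and let κ_{12}, κ_{21} ∈ ℂ. Then μ ∈ ℂ is an eigenvalue of the 2N×2N block matrix A = [[A_1, κ_{12} I_N],[κ_{21} I_N, A_2]] if and only if there exists i ∈ {1,…,N} such that μ² − ((λ_1)_i + (λ_2)_i) μ + (λ_1)_i (λ_2)_i − κ_{12} κ_{21} = 0. -/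
/-!
Conjugating by `diag(Q, Q)` makes both diagonal blocks upper triangular and leaves the scalar
off-diagonal blocks unchanged. A scalar block commutes with everything, so
`det (μ - A) = det ((μ - T₁) (μ - T₂) - κ₁₂ κ₂₁)`, and the matrix on the right is upper
triangular with the `N` quadratics on its diagonal.
-/

open Matrix Polynomial

namespace Matrix

variable {n R : Type*} [Fintype n] [DecidableEq n] [CommRing R]

theorem det_fromBlocks_of_commute (A B C D : Matrix n n R) (hCD : Commute C D) :
    (fromBlocks A B C D).det = (A * D - B * C).det := by
  -- `D` is replaced by `X + D` over `R[X]`, whose determinant is monic and hence cancellable.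
  set D' : Matrix n n R[X] := charmatrix (-D)
  have hCD' : Commute (C.map Polynomial.C) D' :=
    (scalar_commute _ (Commute.all X) _).symm.sub_right (hCD.neg_right.map Polynomial.C.mapMatrix)
  have hpoly : (fromBlocks (A.map Polynomial.C) (B.map Polynomial.C) (C.map Polynomial.C) D').det =
      (A.map Polynomial.C * D' - B.map Polynomial.C * C.map Polynomial.C).det := by
    have hmul : fromBlocks (A.map Polynomial.C) (B.map Polynomial.C) (C.map Polynomial.C) D' *
        fromBlocks D' 0 (-C.map Polynomial.C) 1 =
        fromBlocks (A.map Polynomial.C * D' - B.map Polynomial.C * C.map Polynomial.C)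
          (B.map Polynomial.C) 0 D' := by
      simp [fromBlocks_multiply, hCD'.eq, sub_eq_add_neg]
    have := congrArg det hmul
    rw [det_mul, det_fromBlocks_zero₁₂, det_fromBlocks_zero₂₁, det_one, mul_one] at this
    exact (charpoly_monic (-D)).isRegular.right.eq_iff.mp this
  have hC_eval : ∀ M : Matrix n n R, (M.map Polynomial.C).map (evalRingHom 0) = M := fun M => by
    ext; simp
  have hD_eval : D'.map (evalRingHom 0) = D := by
    ext i j; by_cases h : i = j <;> simp [D', h]
  have := congrArg (evalRingHom (0 : R)) hpoly
  rw [RingHom.map_det, RingHom.map_det, map_sub, map_mul, map_mul] at this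
  simpa only [RingHom.mapMatrix_apply, fromBlocks_map, hC_eval, hD_eval] using this

theorem IsUpperTriangular.mul_apply_self {m S : Type*} [Fintype m] [LinearOrder m]
    [NonUnitalNonAssocSemiring S] {M N : Matrix m m S} (hM : M.IsUpperTriangular)
    (hN : N.IsUpperTriangular) (i : m) : (M * N) i i = M i i * N i i := by
  rw [mul_apply, Finset.sum_eq_single i (fun k _ hk => ?_) (by simp)]
  rcases hk.lt_or_gt with hki | hik
  · rw [hM hki, zero_mul]
  · rw [hN hik, mul_zero]

theorem smul_one_map_C (c : R) :
    (c • (1 : Matrix n n R)).map Polynomial.C = scalar n (Polynomial.C c) := by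
  ext i j; by_cases h : i = j <;> simp [h]

theorem charpoly_fromBlocks_smul_one_of_isUpperTriangular [LinearOrder n]
    {T₁ T₂ : Matrix n n R} (h₁ : T₁.IsUpperTriangular) (h₂ : T₂.IsUpperTriangular) (b c : R) :
    (fromBlocks T₁ (b • 1) (c • 1) T₂).charpoly =
      ∏ i, ((X - Polynomial.C (T₁ i i)) * (X - Polynomial.C (T₂ i i)) - Polynomial.C (b * c)) := by
  have hcomm : Commute (-scalar n (Polynomial.C c)) T₂.charmatrix :=
    (scalar_commute _ (Commute.all _) _).neg_left
  rw [charpoly, charmatrix_fromBlocks, smul_one_map_C, smul_one_map_C,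
    det_fromBlocks_of_commute _ _ _ _ hcomm]
  have htri : (T₁.charmatrix * T₂.charmatrix -
      -scalar n (Polynomial.C b) * -scalar n (Polynomial.C c)).IsUpperTriangular :=
    (h₁.charmatrix.mul h₂.charmatrix).sub
      ((blockTriangular_diagonal _).neg.mul (blockTriangular_diagonal _).neg)
  rw [det_of_isUpperTriangular htri]
  refine Finset.prod_congr rfl fun i _ => ?_
  rw [sub_apply, IsUpperTriangular.mul_apply_self h₁.charmatrix h₂.charmatrix, charmatrix_apply_eq,
    charmatrix_apply_eq]
  simp

theorem charpoly_mul_mul_of_mul_eq_one {m : Type*} [Fintype m] [DecidableEq m]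
    {U V : Matrix m m R} (h : U * V = 1) (M : Matrix m m R) :
    (V * M * U).charpoly = M.charpoly := by
  rw [charpoly_mul_comm, ← Matrix.mul_assoc, h, Matrix.one_mul]

theorem charpoly_fromBlocks_smul_one_conj {Q V : Matrix n n R} (hQV : Q * V = 1)
    (A₁ A₂ : Matrix n n R) (b c : R) :
    (fromBlocks (V * A₁ * Q) (b • 1) (c • 1) (V * A₂ * Q)).charpoly =
      (fromBlocks A₁ (b • 1) (c • 1) A₂).charpoly := by
  have hVQ : V * Q = 1 := mul_eq_one_comm.mp hQV
  have hconj : fromBlocks V 0 0 V * fromBlocks A₁ (b • 1) (c • 1) A₂ * fromBlocks Q 0 0 Q =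
      fromBlocks (V * A₁ * Q) (b • 1) (c • 1) (V * A₂ * Q) := by
    simp [fromBlocks_multiply, Matrix.mul_assoc, hVQ]
  rw [← hconj, charpoly_mul_mul_of_mul_eq_one]
  simp [fromBlocks_multiply, hQV]

end Matrix

/-- Duplex decomposition: μ is an eigenvalue of the duplex matrix iff it
solves one of the N quadratic equations built from the layer eigenvalues. -/
theorem duplex_eigenvalue_quadratic (N : ℕ)
    (Q : Matrix (Fin N) (Fin N) ℂ) (hQ : Q ∈ Matrix.unitaryGroup (Fin N) ℂ)
    (A₁ A₂ : Matrix (Fin N) (Fin N) ℂ)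
    (hT₁ : ∀ i j : Fin N, j < i → (Qᴴ * A₁ * Q) i j = 0)
    (hT₂ : ∀ i j : Fin N, j < i → (Qᴴ * A₂ * Q) i j = 0)
    (κ₁₂ κ₂₁ : ℂ) (μ : ℂ) :
    (Matrix.fromBlocks A₁ (κ₁₂ • (1 : Matrix (Fin N) (Fin N) ℂ))
        (κ₂₁ • (1 : Matrix (Fin N) (Fin N) ℂ)) A₂).charpoly.IsRoot μ ↔
      ∃ i : Fin N,
        μ ^ 2 - ((Qᴴ * A₁ * Q) i i + (Qᴴ * A₂ * Q) i i) * μ +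
            (Qᴴ * A₁ * Q) i i * (Qᴴ * A₂ * Q) i i - κ₁₂ * κ₂₁ = 0 := by
  have hQQ : Q * Qᴴ = 1 := mem_unitaryGroup_iff.mp hQ
  rw [← charpoly_fromBlocks_smul_one_conj hQQ,
    charpoly_fromBlocks_smul_one_of_isUpperTriangular (fun i j => hT₁ i j) (fun i j => hT₂ i j),
    IsRoot, eval_prod, Finset.prod_eq_zero_iff]
  simp only [Finset.mem_univ, true_and]
  refine exists_congr fun i => ?_
  simp only [eval_sub, eval_mul, eval_X, eval_C]
  exact Iff.of_eq (congrArg (· = 0) (by ring))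
end

section
/- Let L_1, L_2 ∈ ℝ^{N×N} be simultaneously unitarily triangularizable with common unitary Q, with i-th diagonal entries (λ_1)_i and (λ_2)_i of Q^H L_1 Q and Q^H L_2 Q, and let κ_{12}, κ_{21} ∈ ℝ. Then the eigenvalues of the supra-Laplacian L_supra = [[L_1 + κ_{12} I_N, −κ_{12} I_N],[−κ_{21} I_N, L_2 + κ_{21} I_N]] are exactly the roots μ of the N quadratic equations (μ − (λ_1)_i − κ_{12})(μ − (λ_2)_i − κ_{21}) − κ_{12}κ_{21} = 0, i = 1,…,N. -/
/-!
Conjugating by the block-diagonal unitary `diag(Q, Q)` preserves the characteristic polynomial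
and turns the supra-Laplacian into one whose four blocks are upper triangular (the off-diagonal
blocks are scalar). Grouping the coordinates `inl i` and `inr i` together, such a matrix is block
upper triangular with `2 × 2` diagonal blocks `[[λ₁ᵢ + κ₁₂, -κ₁₂], [-κ₂₁, λ₂ᵢ + κ₂₁]]`, and the
characteristic polynomial is the product of theirs, which are the stated quadratics.
-/

open Matrix Polynomial

namespace Matrix

section Unitary

variable {R : Type*} [CommRing R] [StarRing R] {ι : Type*} [Fintype ι] [DecidableEq ι]

theorem charpoly_conjTranspose_mul_mul_of_mem_unitary {U : Matrix ι ι R}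
    (hU : U ∈ unitary (Matrix ι ι R)) (M : Matrix ι ι R) :
    (Uᴴ * M * U).charpoly = M.charpoly := by
  rw [charpoly_mul_comm, ← mul_assoc, ← star_eq_conjTranspose, Unitary.mul_star_self_of_mem hU,
    one_mul]

theorem fromBlocks_zero_zero_mem_unitary {U V : Matrix ι ι R}
    (hU : U ∈ unitary (Matrix ι ι R)) (hV : V ∈ unitary (Matrix ι ι R)) :
    fromBlocks U 0 0 V ∈ unitary (Matrix (ι ⊕ ι) (ι ⊕ ι) R) := by
  have hU₁ : Uᴴ * U = 1 := Unitary.star_mul_self_of_mem hU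
  have hU₂ : U * Uᴴ = 1 := Unitary.mul_star_self_of_mem hU
  have hV₁ : Vᴴ * V = 1 := Unitary.star_mul_self_of_mem hV
  have hV₂ : V * Vᴴ = 1 := Unitary.mul_star_self_of_mem hV
  constructor <;>
    simp [star_eq_conjTranspose, fromBlocks_conjTranspose, fromBlocks_multiply, hU₁, hU₂, hV₁, hV₂]

theorem charpoly_fromBlocks_conjTranspose_mul_mul {U : Matrix ι ι R}
    (hU : U ∈ unitary (Matrix ι ι R)) (A B C D : Matrix ι ι R) :
    (fromBlocks (Uᴴ * A * U) (Uᴴ * B * U) (Uᴴ * C * U) (Uᴴ * D * U)).charpoly =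
      (fromBlocks A B C D).charpoly := by
  have hconj : fromBlocks (Uᴴ * A * U) (Uᴴ * B * U) (Uᴴ * C * U) (Uᴴ * D * U) =
      (fromBlocks U 0 0 U)ᴴ * fromBlocks A B C D * fromBlocks U 0 0 U := by
    simp only [fromBlocks_conjTranspose, conjTranspose_zero, fromBlocks_multiply,
      Matrix.mul_zero, Matrix.zero_mul, add_zero, zero_add]
  rw [hconj, charpoly_conjTranspose_mul_mul_of_mem_unitary (fromBlocks_zero_zero_mem_unitary hU hU)]

end Unitary

theorem BlockTriangular.fromBlocks_sumElim_id {α ι : Type*} [Zero α] [LinearOrder ι]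
    {A B C D : Matrix ι ι α} (hA : A.BlockTriangular id) (hB : B.BlockTriangular id)
    (hC : C.BlockTriangular id) (hD : D.BlockTriangular id) :
    (fromBlocks A B C D).BlockTriangular (Sum.elim id id) := by
  rintro (i | i) (j | j) hij
  exacts [hA hij, hB hij, hC hij, hD hij]

def finTwoEquivFiberSumElimId {ι : Type*} (i : ι) :
    Fin 2 ≃ {k : ι ⊕ ι // Sum.elim id id k = i} where
  toFun t := if t = 0 then ⟨.inl i, rfl⟩ else ⟨.inr i, rfl⟩
  invFun k := Sum.elim (fun _ => 0) (fun _ => 1) k.1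
  left_inv t := by fin_cases t <;> simp
  right_inv := by rintro ⟨j | j, rfl⟩ <;> simp

section SumElimId

variable {R : Type*} [CommRing R] {ι : Type*} [Fintype ι] [LinearOrder ι]

theorem charpoly_toSquareBlock_sumElim_id (M : Matrix (ι ⊕ ι) (ι ⊕ ι) R) (i : ι) :
    (M.toSquareBlock (Sum.elim id id) i).charpoly =
      (X - C (M (.inl i) (.inl i))) * (X - C (M (.inr i) (.inr i))) -
        C (M (.inl i) (.inr i) * M (.inr i) (.inl i)) := by
  rw [← charpoly_reindex (finTwoEquivFiberSumElimId i).symm, charpoly, det_fin_two]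
  simp [finTwoEquivFiberSumElimId, toSquareBlock_def]

theorem charpoly_fromBlocks_of_blockTriangular_id {A B C D : Matrix ι ι R}
    (hA : A.BlockTriangular id) (hB : B.BlockTriangular id)
    (hC : C.BlockTriangular id) (hD : D.BlockTriangular id) :
    (fromBlocks A B C D).charpoly =
      ∏ i, ((X - Polynomial.C (A i i)) * (X - Polynomial.C (D i i)) -
        Polynomial.C (B i i * C i i)) := by
  rw [(BlockTriangular.fromBlocks_sumElim_id hA hB hC hD).charpoly,
    Finset.image_univ_of_surjective (fun i => ⟨.inl i, rfl⟩)]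
  exact Finset.prod_congr rfl fun i _ => charpoly_toSquareBlock_sumElim_id _ i

end SumElimId

section SupraLaplacian

variable {R : Type*} [CommRing R] {ι : Type*}

def supraLaplacian [DecidableEq ι] (A B : Matrix ι ι R) (a b : R) :
    Matrix (ι ⊕ ι) (ι ⊕ ι) R :=
  fromBlocks (A + a • 1) (-(a • 1)) (-(b • 1)) (B + b • 1)

theorem supraLaplacian_map [DecidableEq ι] {S : Type*} [CommRing S] (f : R →+* S)
    (A B : Matrix ι ι R) (a b : R) :
    (supraLaplacian A B a b).map f = supraLaplacian (A.map f) (B.map f) (f a) (f b) := by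
  simp [supraLaplacian, fromBlocks_map, Matrix.map_add, smul_one_eq_diagonal, diagonal_map]

theorem charpoly_supraLaplacian_conjTranspose_mul_mul [Fintype ι] [DecidableEq ι] [StarRing R]
    {U : Matrix ι ι R} (hU : U ∈ unitary (Matrix ι ι R)) (A B : Matrix ι ι R) (a b : R) :
    (supraLaplacian (Uᴴ * A * U) (Uᴴ * B * U) a b).charpoly =
      (supraLaplacian A B a b).charpoly := by
  have hU₁ : Uᴴ * U = 1 := Unitary.star_mul_self_of_mem hU
  have hconj (M : Matrix ι ι R) (c : R) : Uᴴ * (M + c • 1) * U = Uᴴ * M * U + c • 1 := by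
    simp [Matrix.mul_add, Matrix.add_mul, hU₁]
  have hconj_scalar (c : R) : Uᴴ * (-(c • 1)) * U = -(c • 1) := by
    simp [hU₁]
  rw [supraLaplacian, supraLaplacian, ← charpoly_fromBlocks_conjTranspose_mul_mul hU (A + a • 1),
    hconj, hconj, hconj_scalar, hconj_scalar]

theorem charpoly_supraLaplacian_of_blockTriangular [Fintype ι] [LinearOrder ι]
    {A B : Matrix ι ι R} (hA : A.BlockTriangular id) (hB : B.BlockTriangular id) (a b : R) :
    (supraLaplacian A B a b).charpoly =
      ∏ i, ((X - Polynomial.C (A i i + a)) * (X - Polynomial.C (B i i + b)) -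
        Polynomial.C (a * b)) := by
  have hscalar (c : R) : (c • 1 : Matrix ι ι R).BlockTriangular id := by
    rw [smul_one_eq_diagonal]
    exact blockTriangular_diagonal _
  rw [supraLaplacian, charpoly_fromBlocks_of_blockTriangular_id (hA.add (hscalar a))
    (hscalar a).neg (hscalar b).neg (hB.add (hscalar b))]
  simp

end SupraLaplacian

end Matrix

/-- The characteristic polynomial of the duplex supra-Laplacian factors as the
product of the N quadratics (μ−(λ₁)ᵢ−κ₁₂)(μ−(λ₂)ᵢ−κ₂₁)−κ₁₂κ₂₁. -/
theorem supra_laplacian_charpoly_factorization (N : ℕ)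
    (L₁ L₂ : Matrix (Fin N) (Fin N) ℝ)
    (Q : Matrix (Fin N) (Fin N) ℂ) (hQ : Q ∈ Matrix.unitaryGroup (Fin N) ℂ)
    (hT₁ : ∀ i j : Fin N, j < i → (Qᴴ * (L₁.map Complex.ofReal) * Q) i j = 0)
    (hT₂ : ∀ i j : Fin N, j < i → (Qᴴ * (L₂.map Complex.ofReal) * Q) i j = 0)
    (κ₁₂ κ₂₁ : ℝ) :
    ((Matrix.fromBlocks (L₁ + κ₁₂ • 1) (-(κ₁₂ • 1)) (-(κ₂₁ • 1))
        (L₂ + κ₂₁ • 1)).map Complex.ofReal).charpoly =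
      ∏ i : Fin N,
        ((X - C ((Qᴴ * (L₁.map Complex.ofReal) * Q) i i + (κ₁₂ : ℂ))) *
            (X - C ((Qᴴ * (L₂.map Complex.ofReal) * Q) i i + (κ₂₁ : ℂ))) -
          C ((κ₁₂ : ℂ) * (κ₂₁ : ℂ))) := by
  have hmap : (supraLaplacian L₁ L₂ κ₁₂ κ₂₁).map Complex.ofReal =
      supraLaplacian (L₁.map Complex.ofReal) (L₂.map Complex.ofReal) κ₁₂ κ₂₁ :=
    supraLaplacian_map Complex.ofRealHom L₁ L₂ κ₁₂ κ₂₁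
  change ((supraLaplacian L₁ L₂ κ₁₂ κ₂₁).map Complex.ofReal).charpoly = _
  rw [hmap, ← charpoly_supraLaplacian_conjTranspose_mul_mul hQ,
    charpoly_supraLaplacian_of_blockTriangular (fun i j => hT₁ i j) (fun i j => hT₂ i j)]
end

section
/- Let S ∈ ℂ^{M×M} have zero diagonal and let L_S = diag(Σ_ℓ κ_{1ℓ}, …, Σ_ℓ κ_{Mℓ}) − S be its Laplacian, where κ_{kℓ} are the entries of S. For any Laplacian matrices L_1,…,L_M ∈ ℂ^{N×N} (each with all row sums zero), every eigenvalue ρ of L_S is an eigenvalue of the supra-Laplacian L_supra = diag(L_1,…,L_M) + L_S ⊗ I_N; specifically, if v ∈ ℂ^M satisfies L_S v = ρ v, then v ⊗ (1,…,1)^T is an eigenvector of L_supra with eigenvalue ρ. -/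
/-!
On vectors constant along each layer, `v ⊗ 𝟙`, the block-diagonal part `diag(L₁, …, L_M)` acts
as zero because every `L_ℓ` kills `𝟙`, while `L_S ⊗ I` acts as `(L_S v) ⊗ 𝟙`. Hence an eigenpair
`(ρ, v)` of `L_S` lifts to the eigenpair `(ρ, v ⊗ 𝟙)` of the supra-Laplacian.
-/

open Matrix
open scoped Kronecker

theorem comp_fst_ne_zero {ι κ α : Type*} [Zero α] [Nonempty κ] {v : ι → α} (hv : v ≠ 0) :
    (fun p : ι × κ => v p.1) ≠ 0 := fun h =>
  hv <| funext fun i => congrFun h (i, Classical.arbitrary κ)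

section LayerConstant

variable {ι κ R : Type*} [Fintype ι] [Fintype κ]

/- `blockDiagonal` indexes the blocks by the second coordinate; the swap moves them to the first,
as in `diag(L₁, …, L_M)` acting on `ℂ^M ⊗ ℂ^N`. -/
theorem blockDiagonal_submatrix_swap_mulVec_comp_fst [DecidableEq ι] [Semiring R]
    (L : ι → Matrix κ κ R) (hL : ∀ i, L i *ᵥ (fun _ => 1) = 0) (v : ι → R) :
    (blockDiagonal L).submatrix Prod.swap Prod.swap *ᵥ (fun p : ι × κ => v p.1) = 0 := by
  ext ⟨i, k⟩
  have hrow : ∑ j, L i k j = 0 := by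
    simpa [mulVec, dotProduct] using congrFun (hL i) k
  simp [mulVec, dotProduct, Fintype.sum_prod_type, blockDiagonal_apply, ite_mul,
    ← Finset.sum_mul, hrow]

theorem kronecker_one_mulVec_comp_fst [DecidableEq κ] [NonAssocSemiring R] (A : Matrix ι ι R)
    (v : ι → R) :
    (A ⊗ₖ (1 : Matrix κ κ R)) *ᵥ (fun p : ι × κ => v p.1) = fun p => (A *ᵥ v) p.1 := by
  ext ⟨i, k⟩
  simp [mulVec, dotProduct, Fintype.sum_prod_type, one_apply]

end LayerConstant

theorem interlayer_laplacian_eigenvalues_lift_general (M N : ℕ) (hN : 0 < N)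
    (S : Matrix (Fin M) (Fin M) ℂ)
    (L : Fin M → Matrix (Fin N) (Fin N) ℂ)
    (hL : ∀ ℓ, L ℓ *ᵥ (fun _ => (1 : ℂ)) = 0)
    (ρ : ℂ) (v : Fin M → ℂ) (hv : v ≠ 0)
    (hvec : (Matrix.diagonal (fun k => ∑ ℓ, S k ℓ) - S) *ᵥ v = ρ • v) :
    (Matrix.of fun p q : Fin M × Fin N =>
        (if p.1 = q.1 then L p.1 p.2 q.2 else 0) +
          (Matrix.diagonal (fun k => ∑ ℓ, S k ℓ) - S) p.1 q.1 *
            (if p.2 = q.2 then 1 else 0)) *ᵥ (fun p => v p.1) =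
      ρ • (fun p : Fin M × Fin N => v p.1) ∧
    (fun p : Fin M × Fin N => v p.1) ≠ 0 := by
  have : Nonempty (Fin N) := ⟨⟨0, hN⟩⟩
  set LS := Matrix.diagonal (fun k => ∑ ℓ, S k ℓ) - S
  have hsupra : (Matrix.of fun p q : Fin M × Fin N =>
      (if p.1 = q.1 then L p.1 p.2 q.2 else 0) + LS p.1 q.1 * (if p.2 = q.2 then 1 else 0)) =
      (blockDiagonal L).submatrix Prod.swap Prod.swap + LS ⊗ₖ (1 : Matrix (Fin N) (Fin N) ℂ) := by
    ext p q
    simp [blockDiagonal_apply, one_apply]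
  refine ⟨?_, comp_fst_ne_zero hv⟩
  rw [hsupra, add_mulVec, blockDiagonal_submatrix_swap_mulVec_comp_fst L hL,
    kronecker_one_mulVec_comp_fst, hvec, zero_add]
  rfl

/-- Every eigenvalue ρ of the interlayer Laplacian L_S is an eigenvalue of the
supra-Laplacian, with eigenvector v ⊗ (1,…,1). -/
theorem interlayer_laplacian_eigenvalues_lift (M N : ℕ) (hN : 0 < N)
    (S : Matrix (Fin M) (Fin M) ℂ) (hdiag : ∀ k, S k k = 0)
    (L : Fin M → Matrix (Fin N) (Fin N) ℂ)
    (hL : ∀ ℓ, L ℓ *ᵥ (fun _ => (1 : ℂ)) = 0)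
    (ρ : ℂ) (v : Fin M → ℂ) (hv : v ≠ 0)
    (hvec : (Matrix.diagonal (fun k => ∑ ℓ, S k ℓ) - S) *ᵥ v = ρ • v) :
    (Matrix.of fun p q : Fin M × Fin N =>
        (if p.1 = q.1 then L p.1 p.2 q.2 else 0) +
          (Matrix.diagonal (fun k => ∑ ℓ, S k ℓ) - S) p.1 q.1 *
            (if p.2 = q.2 then 1 else 0)) *ᵥ (fun p => v p.1) =
      ρ • (fun p : Fin M × Fin N => v p.1) ∧
    (fun p : Fin M × Fin N => v p.1) ≠ 0 :=
  interlayer_laplacian_eigenvalues_lift_general M N hN S L hL ρ v hv hvec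
end
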